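/- arXiv:1806.05369 — 4 statements merged into one kernel-verified Lean document; each statement's English description precedes it below -/
import Mathlib

section
/- Let N₀ > 1 be sufficiently large. For every fixed N ≥ N₀ there exists a constant C > 0, depending only on ρ₀ := inf_{[0,T]} ρ, T and N, such that for every s ∈ ℂ with Re s ≤ 0, Im s ≥ 0 and N·Im s + Re s ≤ 0, one has |∫₀ᵀ ρ(t) e^{-st} dt| ≥ C ∫₀ᵀ e^{-t·Re s} dt. -/
/-!
Write `σ = -Re s`, so that `N |Im s| ≤ σ`. Rotating the integral by `e^{i T Im s}` turns its real
part into `∫₀ᵀ ρ(t) e^{σt} cos (Im s (T - t)) dt`. As `cos x ≥ 1 - |x|`, this is at least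
`∫₀ᵀ (ρ₀ - (M/N) σ (T - t)) e^{σt} dt` with `ρ₀ ≤ ρ ≤ M` on `[0, T]`, and integrating by parts,
`∫₀ᵀ σ (T - t) e^{σt} dt = ∫₀ᵀ e^{σt} dt - T`. Hence `N ≥ 2M/ρ₀` gives the bound with `C = ρ₀/2`.
-/

open Real Set intervalIntegral

lemma one_sub_abs_le_cos (x : ℝ) : 1 - |x| ≤ cos x := by
  rcases le_or_gt |x| 2 with h | h
  · nlinarith [one_sub_sq_div_two_le_cos (x := x), sq_abs x, abs_nonneg x]
  · linarith [neg_one_le_cos x]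

lemma sub_mul_abs_le_mul_cos {m r M : ℝ} (hm : 0 ≤ m) (hmr : m ≤ r) (hrM : r ≤ M) (x : ℝ) :
    m - M * |x| ≤ r * cos x := by
  nlinarith [one_sub_abs_le_cos x, abs_nonneg x]

lemma integral_mul_sub_mul_exp (σ T : ℝ) :
    ∫ t in (0:ℝ)..T, σ * (T - t) * exp (σ * t) = (∫ t in (0:ℝ)..T, exp (σ * t)) - T := by
  have hderiv : ∀ t ∈ uIcc 0 T, HasDerivAt (fun t => (T - t) * exp (σ * t))
      (σ * (T - t) * exp (σ * t) - exp (σ * t)) t := by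
    intro t _
    exact (((hasDerivAt_id' t).const_sub T).mul ((hasDerivAt_id' t).const_mul σ).exp).congr_deriv
      (by ring)
  have hcont (f : ℝ → ℝ) (hf : Continuous f) : IntervalIntegrable f MeasureTheory.volume 0 T :=
    hf.intervalIntegrable _ _
  have := integral_eq_sub_of_hasDerivAt hderiv (hcont _ (by fun_prop))
  rw [integral_sub (hcont _ (by fun_prop)) (hcont _ (by fun_prop))] at this
  simp only [sub_self, zero_mul, mul_zero, exp_zero, sub_zero, mul_one] at this
  linarith

lemma re_cexp_mul_integral_mul_cexp {f : ℝ → ℝ} {a b : ℝ}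
    (hf : IntervalIntegrable f MeasureTheory.volume a b) (s : ℂ) :
    (Complex.exp (↑(s.im * b) * Complex.I) * ∫ t in a..b, (f t : ℂ) * Complex.exp (-s * t)).re
      = ∫ t in a..b, f t * exp (-s.re * t) * cos (s.im * (b - t)) := by
  have hint : IntervalIntegrable (fun t => (f t : ℂ) * Complex.exp (-s * t))
      MeasureTheory.volume a b :=
    IntervalIntegrable.mul_continuousOn ⟨hf.1.ofReal, hf.2.ofReal⟩ (by fun_prop)
  rw [← intervalIntegral.integral_const_mul, ← RCLike.re_eq_complex_re,
    ← intervalIntegral_re (hint.const_mul _)]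
  refine integral_congr fun t _ => ?_
  rw [mul_left_comm, ← Complex.exp_add]
  simp only [Complex.ofReal_mul, neg_mul, RCLike.mul_re, RCLike.re_to_complex, Complex.ofReal_re,
    Complex.exp_re, Complex.add_re, Complex.mul_re, Complex.ofReal_im, mul_zero, sub_zero,
    Complex.I_re, Complex.mul_im, zero_mul, add_zero, Complex.I_im, mul_one, sub_self,
    Complex.neg_re, zero_add, Complex.add_im, Complex.neg_im, RCLike.im_to_complex]
  ring_nf

lemma le_integral_mul_exp_mul_cos {ρ : ℝ → ℝ} {T m M N σ ω : ℝ} (hT : 0 ≤ T)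
    (hρ : ContinuousOn ρ (Icc 0 T)) (hm : 0 ≤ m) (hmρ : ∀ t ∈ Icc 0 T, m ≤ ρ t)
    (hρM : ∀ t ∈ Icc 0 T, ρ t ≤ M) (hN : 0 < N) (hNω : N * |ω| ≤ σ) :
    (m - M / N) * ∫ t in (0:ℝ)..T, exp (σ * t) ≤
      ∫ t in (0:ℝ)..T, ρ t * exp (σ * t) * cos (ω * (T - t)) := by
  have hM : 0 ≤ M := hm.trans <| (hmρ 0 ⟨le_rfl, hT⟩).trans (hρM 0 ⟨le_rfl, hT⟩)
  have hpointwise : ∀ t ∈ Icc 0 T, m * exp (σ * t) - M / N * (σ * (T - t) * exp (σ * t)) ≤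
      ρ t * exp (σ * t) * cos (ω * (T - t)) := by
    intro t ht
    have hTt : 0 ≤ T - t := sub_nonneg.2 ht.2
    have hωσ : M * |ω * (T - t)| ≤ M / N * (σ * (T - t)) := by
      rw [abs_mul, abs_of_nonneg hTt, div_mul_eq_mul_div, le_div_iff₀ hN]
      nlinarith [mul_nonneg hM hTt]
    have := sub_mul_abs_le_mul_cos hm (hmρ t ht) (hρM t ht) (ω * (T - t))
    nlinarith [exp_pos (σ * t)]
  have hcont (f : ℝ → ℝ) (hf : Continuous f) : IntervalIntegrable f MeasureTheory.volume 0 T :=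
    hf.intervalIntegrable _ _
  calc (m - M / N) * ∫ t in (0:ℝ)..T, exp (σ * t)
      ≤ m * (∫ t in (0:ℝ)..T, exp (σ * t)) - M / N * ((∫ t in (0:ℝ)..T, exp (σ * t)) - T) := by
        nlinarith [div_nonneg hM hN.le]
    _ = ∫ t in (0:ℝ)..T, m * exp (σ * t) - M / N * (σ * (T - t) * exp (σ * t)) := by
        rw [integral_sub (hcont _ (by fun_prop)) (hcont _ (by fun_prop)), integral_const_mul,
          integral_const_mul, integral_mul_sub_mul_exp]
    _ ≤ ∫ t in (0:ℝ)..T, ρ t * exp (σ * t) * cos (ω * (T - t)) := by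
        refine integral_mono_on hT (hcont _ (by fun_prop)) ?_ hpointwise
        refine ContinuousOn.intervalIntegrable ?_
        rw [uIcc_of_le hT]
        exact (hρ.mul (by fun_prop)).mul (by fun_prop)

theorem stmt0_general (T : ℝ) (hT : 0 < T) (ρ ρ' : ℝ → ℝ)
    (hρ : ∀ t ∈ Set.Icc 0 T, HasDerivAt ρ (ρ' t) t)
    (hpos : ∀ t ∈ Set.Icc 0 T, 0 < ρ t) :
    ∃ N₀ : ℝ, 1 < N₀ ∧ ∀ N ≥ N₀, ∃ C > 0, ∀ s : ℂ,
      s.re ≤ 0 → 0 ≤ s.im → N * s.im + s.re ≤ 0 →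
      C * ∫ t in (0:ℝ)..T, Real.exp (-t * s.re) ≤
        ‖∫ t in (0:ℝ)..T, (ρ t : ℂ) * Complex.exp (-s * t)‖ := by
  have hρc : ContinuousOn ρ (Icc 0 T) := fun t ht => (hρ t ht).continuousAt.continuousWithinAt
  obtain ⟨t₀, ht₀, hmin⟩ := isCompact_Icc.exists_isMinOn (nonempty_Icc.2 hT.le) hρc
  obtain ⟨t₁, ht₁, hmax⟩ := isCompact_Icc.exists_isMaxOn (nonempty_Icc.2 hT.le) hρc
  have hm : 0 < ρ t₀ := hpos t₀ ht₀
  have hratio : 0 < 2 * ρ t₁ / ρ t₀ := by have := hpos t₁ ht₁; positivity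
  refine ⟨2 * ρ t₁ / ρ t₀ + 1, by linarith, fun N hN₀ => ⟨ρ t₀ / 2, half_pos hm,
    fun s hre him hNs => ?_⟩⟩
  have hN : 0 < N := by linarith
  have hMN : ρ t₁ / N ≤ ρ t₀ / 2 := by
    have := (div_le_iff₀ hm).1 (by linarith : 2 * ρ t₁ / ρ t₀ ≤ N)
    rw [div_le_div_iff₀ hN two_pos]
    linarith
  rw [show (fun t : ℝ => exp (-t * s.re)) = fun t => exp (-s.re * t) by ext; ring_nf]
  calc ρ t₀ / 2 * ∫ t in (0:ℝ)..T, exp (-s.re * t)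
      ≤ (ρ t₀ - ρ t₁ / N) * ∫ t in (0:ℝ)..T, exp (-s.re * t) := by
        gcongr
        · exact integral_nonneg hT.le fun t _ => (exp_pos _).le
        · linarith
    _ ≤ ∫ t in (0:ℝ)..T, ρ t * exp (-s.re * t) * cos (s.im * (T - t)) :=
        le_integral_mul_exp_mul_cos hT.le hρc hm.le (fun t ht => hmin ht) (fun t ht => hmax ht) hN
          (by rw [abs_of_nonneg him]; linarith)
    _ = (Complex.exp (↑(s.im * T) * Complex.I) *
          ∫ t in (0:ℝ)..T, (ρ t : ℂ) * Complex.exp (-s * t)).re :=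
        (re_cexp_mul_integral_mul_cexp (hρc.intervalIntegrable_of_Icc hT.le) s).symm
    _ ≤ ‖∫ t in (0:ℝ)..T, (ρ t : ℂ) * Complex.exp (-s * t)‖ := by
        refine (Complex.re_le_norm _).trans_eq ?_
        rw [norm_mul, Complex.norm_exp_ofReal_mul_I, one_mul]

/-- Let `N₀ > 1` be sufficiently large. For every fixed `N ≥ N₀` there exists
`C > 0` (depending only on `ρ₀ := inf_[0,T] ρ`, `T` and `N`) such that for every `s ∈ ℂ` with
`Re s ≤ 0`, `Im s ≥ 0` and `N·Im s + Re s ≤ 0`, one has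
`|∫₀ᵀ ρ(t) e^{-st} dt| ≥ C ∫₀ᵀ e^{-t·Re s} dt`. -/
theorem stmt0 (T : ℝ) (hT : 0 < T) (ρ ρ' : ℝ → ℝ)
    (hρ : ∀ t ∈ Set.Icc 0 T, HasDerivAt ρ (ρ' t) t)
    (hρ' : ContinuousOn ρ' (Set.Icc 0 T))
    (hpos : ∀ t ∈ Set.Icc 0 T, 0 < ρ t) :
    ∃ N₀ : ℝ, 1 < N₀ ∧ ∀ N ≥ N₀, ∃ C > 0, ∀ s : ℂ,
      s.re ≤ 0 → 0 ≤ s.im → N * s.im + s.re ≤ 0 →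
      C * ∫ t in (0:ℝ)..T, Real.exp (-t * s.re) ≤
        ‖∫ t in (0:ℝ)..T, (ρ t : ℂ) * Complex.exp (-s * t)‖ :=
  stmt0_general T hT ρ ρ' hρ hpos
end

section
/- There exist constants C > 0 and K > 0 and N₀ > 1 such that for every fixed N ≥ N₀ and every s ∈ ℂ satisfying |s| > K, Re s ≤ 0, Im s ≥ 0 and N·Im s + Re s ≤ 0, one has |∫₀ᵀ ρ(t) e^{-st} dt| ≥ C e^{T|Re s|} / |s|. -/
/-!
Integrating by parts, `c ∫ₐᵇ u e^{ct} = u(b) e^{cb} - u(a) e^{ca} - ∫ₐᵇ u' e^{ct}`. With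
`r = Re c → ∞`, the first term has size `|u(b)| e^{rb}`, the second is `O(e^{ra})` and the
last is `O(e^{rb} / r)`, so `|c| |∫ₐᵇ u e^{ct}| ≥ |u(b)| e^{rb} / 2` once `Re c` is large.
In the sector `0 ≤ Im s`, `N Im s + Re s ≤ 0` (with `N ≥ 1`) we have `|s| ≤ 2 |Re s|`, so
`c = -s` qualifies as soon as `|s|` is large.
-/

open Complex Filter Set

theorem integral_exp_mul_real {r a b : ℝ} (hr : r ≠ 0) :
    ∫ x in a..b, Real.exp (r * x) = (Real.exp (r * b) - Real.exp (r * a)) / r := by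
  rw [intervalIntegral.integral_comp_mul_left (fun x => Real.exp x) hr, integral_exp,
    smul_eq_mul, inv_mul_eq_div]

theorem norm_cexp_mul_ofReal (c : ℂ) (t : ℝ) : ‖cexp (c * t)‖ = Real.exp (c.re * t) := by
  simp [Complex.norm_exp]

theorem mul_integral_mul_cexp {u u' : ℝ → ℂ} {a b : ℝ} {c : ℂ} (hc : c ≠ 0)
    (hu : ∀ t ∈ uIcc a b, HasDerivAt u (u' t) t)
    (hu' : IntervalIntegrable u' MeasureTheory.volume a b) :
    c * ∫ t in a..b, u t * cexp (c * t) =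
      u b * cexp (c * b) - u a * cexp (c * a) - ∫ t in a..b, u' t * cexp (c * t) := by
  have hv : ∀ t : ℝ, HasDerivAt (fun y : ℝ => cexp (c * y) / c) (cexp (c * t)) t := by
    intro t
    have := ((hasDerivAt_id (t : ℂ)).const_mul c).cexp.comp_ofReal.div_const c
    simpa [mul_div_cancel_right₀ _ hc] using this
  rw [intervalIntegral.integral_mul_deriv_eq_deriv_mul hu (fun t _ => hv t) hu'
    ((continuous_exp.comp (continuous_const.mul continuous_ofReal)).intervalIntegrable a b)]
  simp only [← mul_div_assoc, intervalIntegral.integral_div]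
  field_simp

theorem norm_integral_mul_cexp_le {f : ℝ → ℂ} {a b M : ℝ} {c : ℂ} (hab : a ≤ b) (hc : 0 < c.re)
    (hf : ∀ t ∈ Icc a b, ‖f t‖ ≤ M) :
    ‖∫ t in a..b, f t * cexp (c * t)‖ ≤ M * Real.exp (c.re * b) / c.re := by
  have hM : 0 ≤ M := (norm_nonneg _).trans (hf a ⟨le_rfl, hab⟩)
  calc ‖∫ t in a..b, f t * cexp (c * t)‖ ≤ ∫ t in a..b, M * Real.exp (c.re * t) := by
        refine intervalIntegral.norm_integral_le_of_norm_le hab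
          (Eventually.of_forall fun t ht => ?_) ?_
        · rw [norm_mul, norm_cexp_mul_ofReal]
          exact mul_le_mul_of_nonneg_right (hf t (Ioc_subset_Icc_self ht)) (Real.exp_pos _).le
        · exact (continuous_const.mul
            (Real.continuous_exp.comp (continuous_const.mul continuous_id))).intervalIntegrable a b
    _ = M * (Real.exp (c.re * b) - Real.exp (c.re * a)) / c.re := by
        rw [intervalIntegral.integral_const_mul, integral_exp_mul_real hc.ne', mul_div_assoc]
    _ ≤ M * Real.exp (c.re * b) / c.re := by
        gcongr
        linarith [Real.exp_pos (c.re * a)]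

theorem exists_norm_mul_integral_mul_cexp_ge {u u' : ℝ → ℂ} {a b : ℝ} (hab : a < b)
    (hu : ∀ t ∈ Icc a b, HasDerivAt u (u' t) t) (hu' : ContinuousOn u' (Icc a b))
    (hub : u b ≠ 0) :
    ∃ R, ∀ c : ℂ, R ≤ c.re →
      ‖u b‖ / 2 * Real.exp (c.re * b) ≤ ‖c‖ * ‖∫ t in a..b, u t * cexp (c * t)‖ := by
  obtain ⟨M, hM⟩ := isCompact_Icc.exists_bound_of_continuousOn hu'
  have hq : 0 < ‖u b‖ / 4 := by positivity
  have hlarge : ∀ᶠ r in atTop,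
      0 < r ∧ M / r ≤ ‖u b‖ / 4 ∧ ‖u a‖ ≤ ‖u b‖ / 4 * Real.exp (r * (b - a)) := by
    have hdecay : Tendsto (fun r : ℝ => M / r) atTop (nhds 0) :=
      tendsto_const_nhds.div_atTop tendsto_id
    have hgrowth : Tendsto (fun r : ℝ => ‖u b‖ / 4 * Real.exp (r * (b - a))) atTop atTop :=
      (Real.tendsto_exp_atTop.comp (tendsto_id.atTop_mul_const (sub_pos.2 hab))).const_mul_atTop hq
    exact (eventually_gt_atTop 0).and
      ((hdecay.eventually_le_const hq).and (hgrowth.eventually_ge_atTop _))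
  obtain ⟨R, hR⟩ := eventually_atTop.1 hlarge
  refine ⟨R, fun c hc => ?_⟩
  obtain ⟨hr, hMr, hua⟩ := hR c.re hc
  have hc0 : c ≠ 0 := fun h => by simp [h] at hr
  rw [← uIcc_of_le hab.le] at hu hu'
  have hparts := mul_integral_mul_cexp hc0 hu hu'.intervalIntegrable
  set J := ∫ t in a..b, u' t * cexp (c * t)
  have hJ : ‖J‖ ≤ ‖u b‖ / 4 * Real.exp (c.re * b) := by
    refine (norm_integral_mul_cexp_le hab.le hr fun t ht => hM t (uIcc_of_le hab.le ▸ ht)).trans ?_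
    rw [mul_div_right_comm]
    gcongr
  have hua' : ‖u a * cexp (c * a)‖ ≤ ‖u b‖ / 4 * Real.exp (c.re * b) := by
    rw [norm_mul, norm_cexp_mul_ofReal,
      show c.re * b = c.re * (b - a) + c.re * a by ring, Real.exp_add, ← mul_assoc]
    gcongr
  calc ‖u b‖ / 2 * Real.exp (c.re * b)
      ≤ ‖u b * cexp (c * b)‖ - ‖u a * cexp (c * a)‖ - ‖J‖ := by
        rw [norm_mul, norm_cexp_mul_ofReal]; linarith
    _ ≤ ‖u b * cexp (c * b) - u a * cexp (c * a) - J‖ :=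
        (sub_le_sub_right (norm_sub_norm_le _ _) _).trans (norm_sub_norm_le _ _)
    _ = ‖c‖ * ‖∫ t in a..b, u t * cexp (c * t)‖ := by rw [← hparts, norm_mul]

theorem norm_le_two_mul_neg_re {s : ℂ} (him : 0 ≤ s.im) (him_le : s.im ≤ -s.re) :
    ‖s‖ ≤ 2 * -s.re := by
  have := Complex.norm_le_abs_re_add_abs_im s
  rw [abs_of_nonneg him, abs_of_nonpos (by linarith)] at this
  linarith

/-- There exist constants `C > 0`, `K > 0` and `N₀ > 1` such that for every fixed
`N ≥ N₀` and every `s ∈ ℂ` satisfying `|s| > K`, `Re s ≤ 0`, `Im s ≥ 0` and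
`N·Im s + Re s ≤ 0`, one has `|∫₀ᵀ ρ(t) e^{-st} dt| ≥ C e^{T|Re s|} / |s|`. -/
theorem stmt8 (T : ℝ) (hT : 0 < T) (ρ ρ' : ℝ → ℝ)
    (hρ : ∀ t ∈ Set.Icc 0 T, HasDerivAt ρ (ρ' t) t)
    (hρ' : ContinuousOn ρ' (Set.Icc 0 T))
    (hpos : ∀ t ∈ Set.Icc 0 T, 0 < ρ t) :
    ∃ C > 0, ∃ K > 0, ∃ N₀ : ℝ, 1 < N₀ ∧ ∀ N ≥ N₀, ∀ s : ℂ,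
      K < ‖s‖ → s.re ≤ 0 → 0 ≤ s.im → N * s.im + s.re ≤ 0 →
      C * Real.exp (T * |s.re|) / ‖s‖ ≤
        ‖∫ t in (0:ℝ)..T, (ρ t : ℂ) * Complex.exp (-s * t)‖ := by
  have hρT : 0 < ρ T := hpos T ⟨hT.le, le_rfl⟩
  obtain ⟨R, hR⟩ := exists_norm_mul_integral_mul_cexp_ge hT (fun t ht => (hρ t ht).ofReal_comp)
    (continuous_ofReal.comp_continuousOn hρ') (ofReal_ne_zero.2 hρT.ne')
  refine ⟨ρ T / 2, by positivity, 2 * max R 1, by positivity, 2, one_lt_two, ?_⟩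
  intro N hN s hK hre him hcone
  have hs : ‖s‖ ≤ 2 * -s.re := norm_le_two_mul_neg_re him (by nlinarith)
  have hRre : R ≤ (-s).re := by
    rw [neg_re]; linarith [le_max_left R 1]
  have hbound := hR (-s) hRre
  rw [norm_neg, neg_re, norm_real, Real.norm_of_nonneg hρT.le] at hbound
  rw [abs_of_nonpos hre, mul_comm T, div_le_iff₀ ((by positivity : (0:ℝ) < 2 * max R 1).trans hK),
    mul_comm ‖_‖]
  exact hbound
end

section
/- Suppose ρ(t) ≥ ρ₀ > 0 for all t ∈ [0,T]. Then for every s ∈ ℂ with Re s ≤ 0 and T·|Im s| ≤ 1/4, one has |∫₀ᵀ ρ(t) e^{-st} dt| ≥ (ρ₀/4) ∫₀ᵀ e^{-t·Re s} dt. -/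
/-!
The real part of `ρ(t) e^{-st}` is `ρ(t) e^{-t Re s} cos(t Im s)`. Since `|t Im s| ≤ 1/4` on
`[0,T]`, the cosine is at least `1/2`, so this real part dominates `(ρ₀/2) e^{-t Re s}`
pointwise; integrating and bounding the real part of the integral by its modulus gives the claim.
-/

open Complex MeasureTheory

lemma Real.half_le_cos_of_abs_le_one {x : ℝ} (hx : |x| ≤ 1) : 1 / 2 ≤ Real.cos x := by
  have hsq : x ^ 2 ≤ 1 := by nlinarith [sq_abs x, abs_nonneg x]
  linarith [Real.one_sub_sq_div_two_le_cos (x := x)]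

lemma Complex.half_mul_exp_re_le_re_ofReal_mul_exp {c r : ℝ} {w : ℂ} (hc : 0 ≤ c) (hcr : c ≤ r)
    (hw : |w.im| ≤ 1) : c / 2 * Real.exp w.re ≤ ((r : ℂ) * exp w).re := by
  have hcos := Real.half_le_cos_of_abs_le_one hw
  rw [re_ofReal_mul, exp_re]
  calc c / 2 * Real.exp w.re = c * (Real.exp w.re * (1 / 2)) := by ring
    _ ≤ r * (Real.exp w.re * Real.cos w.im) := by gcongr; linarith

lemma intervalIntegral.integral_le_norm_integral_of_le_re {f : ℝ → ℂ} {g : ℝ → ℝ} {a b : ℝ}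
    (hab : a ≤ b) (hg : IntervalIntegrable g volume a b)
    (hf : IntervalIntegrable f volume a b)
    (hgf : ∀ t ∈ Set.Icc a b, g t ≤ (f t).re) :
    ∫ t in a..b, g t ≤ ‖∫ t in a..b, f t‖ :=
  calc ∫ t in a..b, g t ≤ ∫ t in a..b, (f t).re :=
        integral_mono_on hab hg ⟨hf.1.re, hf.2.re⟩ hgf
    _ = (∫ t in a..b, f t).re := intervalIntegral_re hf
    _ ≤ ‖∫ t in a..b, f t‖ := re_le_norm _

theorem stmt9_general (T : ℝ) (hT : 0 < T) (ρ₀ : ℝ) (hρ₀ : 0 < ρ₀) (ρ : ℝ → ℝ)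
    (hρ : ContinuousOn ρ (Set.Icc 0 T))
    (hlb : ∀ t ∈ Set.Icc 0 T, ρ₀ ≤ ρ t)
    (s : ℂ) (him : T * |s.im| ≤ 1 / 4) :
    ρ₀ / 4 * ∫ t in (0:ℝ)..T, Real.exp (-t * s.re) ≤
      ‖∫ t in (0:ℝ)..T, (ρ t : ℂ) * Complex.exp (-s * t)‖ := by
  have hIcc : Set.uIcc 0 T = Set.Icc 0 T := Set.uIcc_of_le hT.le
  rw [← intervalIntegral.integral_const_mul]
  refine intervalIntegral.integral_le_norm_integral_of_le_re hT.le
    (Continuous.intervalIntegrable (by fun_prop) _ _)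
    (ContinuousOn.intervalIntegrable (by rw [hIcc]; fun_prop)) fun t ⟨ht0, htT⟩ ↦ ?_
  have hw_re : (-s * t).re = -t * s.re := by simp [mul_comm]
  have hw_im : |(-s * t).im| ≤ 1 := by
    have : |(-s * t).im| = t * |s.im| := by simp [abs_mul, abs_of_nonneg ht0, mul_comm]
    nlinarith [abs_nonneg s.im]
  calc ρ₀ / 4 * Real.exp (-t * s.re) ≤ ρ₀ / 2 * Real.exp (-t * s.re) := by
        gcongr; linarith
    _ ≤ ((ρ t : ℂ) * exp (-s * t)).re := by
        rw [← hw_re]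
        exact half_mul_exp_re_le_re_ofReal_mul_exp hρ₀.le (hlb t ⟨ht0, htT⟩) hw_im

/-- Suppose `ρ(t) ≥ ρ₀ > 0` for all `t ∈ [0,T]`. Then for every `s ∈ ℂ` with
`Re s ≤ 0` and `T·|Im s| ≤ 1/4`, one has
`|∫₀ᵀ ρ(t) e^{-st} dt| ≥ (ρ₀/4) ∫₀ᵀ e^{-t·Re s} dt`. -/
theorem stmt9 (T : ℝ) (hT : 0 < T) (ρ₀ : ℝ) (hρ₀ : 0 < ρ₀) (ρ : ℝ → ℝ)
    (hρ : ContinuousOn ρ (Set.Icc 0 T))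
    (hlb : ∀ t ∈ Set.Icc 0 T, ρ₀ ≤ ρ t)
    (s : ℂ) (hre : s.re ≤ 0) (him : T * |s.im| ≤ 1 / 4) :
    ρ₀ / 4 * ∫ t in (0:ℝ)..T, Real.exp (-t * s.re) ≤
      ‖∫ t in (0:ℝ)..T, (ρ t : ℂ) * Complex.exp (-s * t)‖ :=
  stmt9_general T hT ρ₀ hρ₀ ρ hρ hlb s him
end

section
/- Let ρ : [0,T] → ℝ be continuously differentiable with ρ(t) > 0 on [0,T], and define ρ̂(s) = ∫₀ᵀ ρ(t)e^{-st} dt for s ∈ ℂ. Let g : ℂ → ℂ be an entire function such that |g(s)| ≤ C|ρ̂(s)| for all s ∈ ℂ and some constant C > 0, and suppose s·g(s) → 0 as s → +∞ along the real axis. Then g(s) = 0 for all s ∈ ℂ. -/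
/-!
For `x ≥ 1` the transform is real with `x ρ̂(x) ≥ δ := (min ρ) (1 - e^{-T}) > 0`, so `ρ̂` is an
entire function that does not vanish identically and its zeros are isolated. Near each zero,
`‖g / ρ̂‖ ≤ C` on a punctured neighbourhood, so the singularity is removable; the extension is a
bounded entire function, hence a constant `c` by Liouville, i.e. `g = c ρ̂`. Finally
`‖c‖ δ ≤ ‖x g(x)‖ → 0` forces `c = 0`.
-/

open Filter Set Topology MeasureTheory
open scoped Interval

section Liouville

variable {f g : ℂ → ℂ} {C : ℝ}

lemma Differentiable.eventually_ne_zero_nhdsNE (hf : Differentiable ℂ f) (hf0 : ∃ z, f z ≠ 0)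
    (z : ℂ) : ∀ᶠ w in 𝓝[≠] z, f w ≠ 0 := by
  obtain ⟨z₁, hz₁⟩ := hf0
  refine (hf.analyticAt z).eventually_eq_zero_or_eventually_ne_zero.resolve_left
    fun hzero => hz₁ ?_
  have hana : AnalyticOnNhd ℂ f univ := Complex.analyticOnNhd_univ_iff_differentiable.2 hf
  exact hana.eqOn_zero_of_preconnected_of_eventuallyEq_zero isPreconnected_univ (mem_univ z) hzero
    (mem_univ z₁)

lemma limUnder_nhdsNE_div_of_ne_zero {z : ℂ} (hf : ContinuousAt f z) (hg : ContinuousAt g z)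
    (hz : f z ≠ 0) : limUnder (𝓝[≠] z) (g / f) = g z / f z :=
  ((hg.div hf hz).mono_left nhdsWithin_le_nhds).limUnder_eq

lemma norm_div_apply_le_of_norm_le_mul {z : ℂ} (hle : ‖g z‖ ≤ C * ‖f z‖) (hz : f z ≠ 0) :
    ‖(g / f) z‖ ≤ C := by
  rwa [Pi.div_apply, norm_div, div_le_iff₀ (norm_pos_iff.2 hz)]

variable (hf : Differentiable ℂ f) (hg : Differentiable ℂ g)
  (hzeros : ∀ z, ∀ᶠ w in 𝓝[≠] z, f w ≠ 0) (hle : ∀ z, ‖g z‖ ≤ C * ‖f z‖)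
include hf hg hzeros hle

/-- At a zero `z` of `f`, Riemann's removable singularity theorem applies because `g / f` is
bounded by `C` on a punctured neighbourhood of `z`. -/
lemma differentiable_limUnder_div : Differentiable ℂ fun z => limUnder (𝓝[≠] z) (g / f) := by
  intro z
  obtain ⟨U, hU, hUf⟩ : ∃ U ∈ 𝓝 z, ∀ w ∈ U \ {z}, f w ≠ 0 :=
    ⟨_, eventually_nhdsWithin_iff.1 (hzeros z), fun w hw => hw.1 hw.2⟩
  have hdiff : DifferentiableOn ℂ (g / f) (U \ {z}) := fun w hw =>
    ((hg w).div (hf w) (hUf w hw)).differentiableWithinAt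
  have hbdd : BddAbove (norm ∘ (g / f) '' (U \ {z})) := by
    refine ⟨C, ?_⟩
    rintro _ ⟨w, hw, rfl⟩
    exact norm_div_apply_le_of_norm_le_mul (hle w) (hUf w hw)
  refine ((Complex.differentiableOn_update_limUnder_of_bddAbove hU hdiff hbdd).differentiableAt
    hU).congr_of_eventuallyEq ?_
  filter_upwards [hU] with w hw
  rcases eq_or_ne w z with rfl | hwz
  · simp
  · rw [Function.update_of_ne hwz, limUnder_nhdsNE_div_of_ne_zero (hf w).continuousAt
      (hg w).continuousAt (hUf w ⟨hw, hwz⟩), Pi.div_apply]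

lemma norm_limUnder_div_le (z : ℂ) : ‖limUnder (𝓝[≠] z) (g / f)‖ ≤ C := by
  have hcont := (differentiable_limUnder_div hf hg hzeros hle z).continuousAt.continuousWithinAt
    (s := {z}ᶜ)
  refine le_of_tendsto hcont.tendsto.norm ?_
  filter_upwards [hzeros z] with w hw
  rw [limUnder_nhdsNE_div_of_ne_zero (hf w).continuousAt (hg w).continuousAt hw]
  exact norm_div_apply_le_of_norm_le_mul (hle w) hw

omit hzeros in
theorem exists_forall_eq_const_mul_of_norm_le_mul_norm (hf0 : ∃ z, f z ≠ 0) :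
    ∃ c, ∀ z, g z = c * f z := by
  have hzeros := hf.eventually_ne_zero_nhdsNE hf0
  obtain ⟨c, hc⟩ := (differentiable_limUnder_div hf hg hzeros hle).exists_const_forall_eq_of_bounded
    (isBounded_iff_forall_norm_le.2 ⟨C, by
      rintro _ ⟨z, rfl⟩
      exact norm_limUnder_div_le hf hg hzeros hle z⟩)
  refine ⟨c, fun z => ?_⟩
  rcases eq_or_ne (f z) 0 with hz | hz
  · simpa [hz] using hle z
  · rw [← hc z, limUnder_nhdsNE_div_of_ne_zero (hf z).continuousAt (hg z).continuousAt hz,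
      div_mul_cancel₀ _ hz]

end Liouville

noncomputable def finiteLaplace (a b : ℝ) (f : ℝ → ℂ) (s : ℂ) : ℂ :=
  ∫ t in a..b, f t * Complex.exp (-s * t)

section FiniteLaplace

variable {a b : ℝ}

lemma hasDerivAt_mul_cexp_neg_mul (c : ℂ) (t : ℝ) (s : ℂ) :
    HasDerivAt (fun s : ℂ => c * Complex.exp (-s * t)) (c * (-t * Complex.exp (-s * t))) s :=
  ((((hasDerivAt_neg s).mul_const (t : ℂ)).cexp).const_mul c).congr_deriv (by ring)

lemma norm_mul_neg_mul_cexp_neg_mul_le {s : ℂ} {t r R : ℝ} (hs : ‖s‖ ≤ r) (ht : |t| ≤ R)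
    (c : ℂ) : ‖c * (-t * Complex.exp (-s * t))‖ ≤ ‖c‖ * (R * Real.exp (r * R)) := by
  have hexp : ‖Complex.exp (-s * t)‖ ≤ Real.exp (r * R) := by
    refine (Complex.norm_exp_le_exp_norm _).trans (Real.exp_le_exp.2 ?_)
    rw [norm_mul, norm_neg, Complex.norm_real, Real.norm_eq_abs]
    exact mul_le_mul hs ht (abs_nonneg t) ((norm_nonneg s).trans hs)
  rw [norm_mul, norm_mul, norm_neg, Complex.norm_real, Real.norm_eq_abs]
  have hR : 0 ≤ R := (abs_nonneg t).trans ht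
  gcongr

lemma abs_le_max_abs_abs_of_mem_uIoc {t : ℝ} (ht : t ∈ Ι a b) : |t| ≤ max |a| |b| := by
  rcases mem_uIcc.1 (uIoc_subset_uIcc ht) with ⟨hat, htb⟩ | ⟨hbt, hta⟩
  · exact abs_le_max_abs_abs hat htb
  · exact max_comm |b| |a| ▸ abs_le_max_abs_abs hbt hta

theorem differentiable_finiteLaplace {f : ℝ → ℂ} (hf : IntervalIntegrable f volume a b) :
    Differentiable ℂ (finiteLaplace a b f) := by
  intro s₀
  have hint (s : ℂ) : IntervalIntegrable (fun t => f t * Complex.exp (-s * t)) volume a b :=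
    hf.mul_continuousOn (by fun_prop)
  have hint' : IntervalIntegrable (fun t => f t * (-t * Complex.exp (-s₀ * t))) volume a b :=
    hf.mul_continuousOn (by fun_prop)
  exact (intervalIntegral.hasDerivAt_integral_of_dominated_loc_of_deriv_le
    (Metric.ball_mem_nhds s₀ one_pos) (.of_forall fun s => (hint s).def'.aestronglyMeasurable)
    (hint s₀) hint'.def'.aestronglyMeasurable
    (ae_of_all _ fun t ht s hs => norm_mul_neg_mul_cexp_neg_mul_le
      (norm_lt_of_mem_ball hs).le (abs_le_max_abs_abs_of_mem_uIoc ht) (f t))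
    (hf.norm.mul_const _)
    (ae_of_all _ fun t _ s _ => hasDerivAt_mul_cexp_neg_mul (f t) t s)).2.differentiableAt

lemma finiteLaplace_ofReal (ρ : ℝ → ℝ) (x : ℝ) :
    finiteLaplace a b (fun t => ρ t) x = ↑(∫ t in a..b, ρ t * Real.exp (-x * t)) := by
  rw [finiteLaplace, ← intervalIntegral.integral_ofReal]
  push_cast
  rfl

end FiniteLaplace

lemma integral_exp_neg_mul {x : ℝ} (hx : x ≠ 0) (T : ℝ) :
    ∫ t in (0 : ℝ)..T, Real.exp (-x * t) = (1 - Real.exp (-x * T)) / x := by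
  rw [intervalIntegral.integral_comp_mul_left Real.exp (neg_ne_zero.2 hx), integral_exp]
  simp only [mul_zero, Real.exp_zero, smul_eq_mul, neg_mul]
  field_simp
  ring

section LowerBound

variable {T x m : ℝ} {ρ : ℝ → ℝ}

lemma mul_one_sub_exp_le_mul_integral (hT : 0 ≤ T) (hρ : IntervalIntegrable ρ volume 0 T)
    (hm : ∀ t ∈ Icc 0 T, m ≤ ρ t) (hx : 0 < x) :
    m * (1 - Real.exp (-x * T)) ≤ x * ∫ t in (0 : ℝ)..T, ρ t * Real.exp (-x * t) := by
  have hmono : ∫ t in (0 : ℝ)..T, m * Real.exp (-x * t) ≤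
      ∫ t in (0 : ℝ)..T, ρ t * Real.exp (-x * t) :=
    intervalIntegral.integral_mono_on hT (Continuous.intervalIntegrable (by fun_prop) _ _)
      (hρ.mul_continuousOn (by fun_prop))
      fun t ht => mul_le_mul_of_nonneg_right (hm t ht) (Real.exp_pos _).le
  rw [intervalIntegral.integral_const_mul, integral_exp_neg_mul hx.ne'] at hmono
  calc m * (1 - Real.exp (-x * T)) = x * (m * ((1 - Real.exp (-x * T)) / x)) := by
        field_simp
    _ ≤ _ := mul_le_mul_of_nonneg_left hmono hx.le

theorem exists_pos_le_norm_mul_finiteLaplace (hT : 0 < T) (hρ : ContinuousOn ρ (Icc 0 T))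
    (hpos : ∀ t ∈ Icc 0 T, 0 < ρ t) :
    ∃ δ > 0, ∀ x : ℝ, 1 ≤ x → δ ≤ ‖(x : ℂ) * finiteLaplace 0 T (fun t => ρ t) x‖ := by
  obtain ⟨t₀, ht₀, hmin⟩ := isCompact_Icc.exists_isMinOn (nonempty_Icc.2 hT.le) hρ
  have hexpT : Real.exp (-T) < 1 := Real.exp_lt_one_iff.2 (neg_lt_zero.2 hT)
  refine ⟨ρ t₀ * (1 - Real.exp (-T)), mul_pos (hpos t₀ ht₀) (sub_pos.2 hexpT), fun x hx => ?_⟩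
  have hexp : Real.exp (-x * T) ≤ Real.exp (-T) := Real.exp_le_exp.2 (by nlinarith)
  rw [finiteLaplace_ofReal, ← Complex.ofReal_mul, Complex.norm_real, Real.norm_eq_abs]
  calc ρ t₀ * (1 - Real.exp (-T)) ≤ ρ t₀ * (1 - Real.exp (-x * T)) := by
        gcongr; exact (hpos t₀ ht₀).le
    _ ≤ _ := mul_one_sub_exp_le_mul_integral hT.le (hρ.intervalIntegrable_of_Icc hT.le)
        (fun t ht => hmin ht) (one_pos.trans_le hx)
    _ ≤ _ := le_abs_self _

end LowerBound

theorem stmt16_general (T : ℝ) (hT : 0 < T) (ρ ρ' : ℝ → ℝ)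
    (hρ : ∀ t ∈ Set.Icc 0 T, HasDerivAt ρ (ρ' t) t)
    (hpos : ∀ t ∈ Set.Icc 0 T, 0 < ρ t)
    (g : ℂ → ℂ) (hg : Differentiable ℂ g)
    (C : ℝ)
    (hbound : ∀ s : ℂ, ‖g s‖ ≤
      C * ‖∫ t in (0:ℝ)..T, (ρ t : ℂ) * Complex.exp (-s * t)‖)
    (hdecay : Filter.Tendsto (fun x : ℝ => (x : ℂ) * g x) Filter.atTop (nhds 0)) :
    ∀ s : ℂ, g s = 0 := by
  have hρc : ContinuousOn ρ (Icc 0 T) := fun t ht => (hρ t ht).continuousAt.continuousWithinAt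
  obtain ⟨δ, hδ, hlower⟩ := exists_pos_le_norm_mul_finiteLaplace hT hρc hpos
  have hne : finiteLaplace 0 T (fun t => ρ t) (1 : ℝ) ≠ 0 := fun h0 => by
    have h1 := hlower 1 le_rfl
    rw [h0, mul_zero, norm_zero] at h1
    linarith
  obtain ⟨c, hc⟩ := exists_forall_eq_const_mul_of_norm_le_mul_norm
    (differentiable_finiteLaplace
      ((Complex.continuous_ofReal.comp_continuousOn hρc).intervalIntegrable_of_Icc hT.le))
    hg hbound ⟨_, hne⟩
  have hcδ : ‖c‖ * δ ≤ 0 := by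
    have hlim := hdecay.norm
    rw [norm_zero] at hlim
    refine ge_of_tendsto hlim ?_
    filter_upwards [eventually_ge_atTop 1] with x hx
    rw [hc, mul_left_comm, norm_mul]
    exact mul_le_mul_of_nonneg_left (hlower x hx) (norm_nonneg c)
  have hc0 : c = 0 := norm_le_zero_iff.1 (nonpos_of_mul_nonpos_left hcδ hδ)
  intro s
  rw [hc s, hc0, zero_mul]

/-- Let `ρ : [0,T] → ℝ` be continuously differentiable with `ρ(t) > 0` on
`[0,T]`, and define `ρ̂(s) = ∫₀ᵀ ρ(t)e^{-st} dt` for `s ∈ ℂ`. Let `g : ℂ → ℂ` be an entire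
function such that `|g(s)| ≤ C|ρ̂(s)|` for all `s ∈ ℂ` and some constant `C > 0`, and suppose
`s·g(s) → 0` as `s → +∞` along the real axis. Then `g(s) = 0` for all `s ∈ ℂ`. -/
theorem stmt16 (T : ℝ) (hT : 0 < T) (ρ ρ' : ℝ → ℝ)
    (hρ : ∀ t ∈ Set.Icc 0 T, HasDerivAt ρ (ρ' t) t)
    (hρ' : ContinuousOn ρ' (Set.Icc 0 T))
    (hpos : ∀ t ∈ Set.Icc 0 T, 0 < ρ t)
    (g : ℂ → ℂ) (hg : Differentiable ℂ g)
    (C : ℝ) (hC : 0 < C)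
    (hbound : ∀ s : ℂ, ‖g s‖ ≤
      C * ‖∫ t in (0:ℝ)..T, (ρ t : ℂ) * Complex.exp (-s * t)‖)
    (hdecay : Filter.Tendsto (fun x : ℝ => (x : ℂ) * g x) Filter.atTop (nhds 0)) :
    ∀ s : ℂ, g s = 0 :=
  stmt16_general T hT ρ ρ' hρ hpos g hg C hbound hdecay
end
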